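/- arXiv:1309.5163 — 3 statements merged into one kernel-verified Lean document; each statement's English description precedes it below -/
import Mathlib

section
/- Every finite 2n-regular graph admits a 2-factorization, i.e. its edge set can be partitioned into n spanning subgraphs each of which is 2-regular (Petersen's theorem). -/
open Finset
universe u v

def multigraphDegree {V E : Type*} [Fintype E] [DecidableEq V]
    (ends : E → V × V) (v : V) : ℕ :=
  (Finset.univ.filter fun e => (ends e).1 = v).card
    + (Finset.univ.filter fun e => (ends e).2 = v).card

namespace Petersen

variable {V : Type v} [DecidableEq V]

def degS {E : Type u} [Fintype E] (ends : E → V × V) (v : V) : ℕ :=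
  ∑ e, ((if (ends e).1 = v then 1 else 0) + (if (ends e).2 = v then 1 else 0))

lemma deg_eq {E : Type u} [Fintype E] (ends : E → V × V) (v : V) :
    multigraphDegree ends v = degS ends v := by
  rw [multigraphDegree, degS, Finset.card_filter, Finset.card_filter, Finset.sum_add_distrib]

def cnt {E : Type u} [Fintype E] (f : E → V) (v : V) : ℕ := ∑ e, if f e = v then 1 else 0

lemma orient (N : ℕ) : ∀ (E : Type u) [Fintype E] (ends : E → V × V),
    Fintype.card E ≤ N → (∀ z, Even (degS ends z)) →
    ∃ dir : E → V × V, (∀ e, dir e = ends e ∨ dir e = (ends e).swap) ∧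
      ∀ z, cnt (fun e => (dir e).1) z = cnt (fun e => (dir e).2) z := by
  induction N with
  | zero =>
    intro E _ ends hcard _
    have : IsEmpty E := Fintype.card_eq_zero_iff.mp (Nat.le_zero.mp hcard)
    exact ⟨ends, fun e => Or.inl rfl, fun z => by simp [cnt, Finset.univ_eq_empty]⟩
  | succ N ih =>
    intro E _ ends hcard heven
    classical
    by_cases hE : IsEmpty E
    · exact ⟨ends, fun e => Or.inl rfl, fun z => by simp [cnt, Finset.univ_eq_empty]⟩
    rw [not_isEmpty_iff] at hE
    by_cases hloop : ∃ e0 : E, (ends e0).1 = (ends e0).2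
    · -- remove a loop
      obtain ⟨e0, hl⟩ := hloop
      have hsum : ∀ f : E → ℕ, ∑ e, f e = f e0 + ∑ x : {e : E // e ≠ e0}, f x.1 := by
        intro f
        rw [← Finset.add_sum_erase _ f (mem_univ e0)]
        congr 1
        exact Finset.sum_subtype (univ.erase e0) (by simp) f
      have hcard' : Fintype.card {e : E // e ≠ e0} ≤ N := by
        have h1 : Fintype.card {e : E // e ≠ e0} < Fintype.card E :=
          Fintype.card_subtype_lt (x := e0) (by simp)
        omega
      have heven' : ∀ z, Even (degS (fun x : {e : E // e ≠ e0} => ends x.1) z) := by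
        intro z
        have h1 := heven z
        rw [degS, hsum] at h1
        have h2 : ((if (ends e0).1 = z then 1 else 0) + (if (ends e0).2 = z then 1 else 0)) % 2 = 0 := by
          rw [hl]; split <;> simp
        rw [Nat.even_iff] at h1 ⊢
        rw [degS]
        omega
      obtain ⟨dir', hv', hb'⟩ := ih {e : E // e ≠ e0} (fun x => ends x.1) hcard' heven'
      refine ⟨fun e => if h : e = e0 then ends e0 else dir' ⟨e, h⟩, ?_, ?_⟩
      · intro e
        by_cases h : e = e0
        · subst h; simp
        · simpa [h] using hv' ⟨e, h⟩
      · intro z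
        rw [cnt, cnt, hsum, hsum]
        have hfst : ∀ x : {e : E // e ≠ e0},
            (if ((if h : x.1 = e0 then ends e0 else dir' ⟨x.1, h⟩) : V × V).1 = z then 1 else 0)
            = (if (dir' x).1 = z then (1:ℕ) else 0) := by
          intro x; rw [dif_neg x.2]
        have hsnd : ∀ x : {e : E // e ≠ e0},
            (if ((if h : x.1 = e0 then ends e0 else dir' ⟨x.1, h⟩) : V × V).2 = z then 1 else 0)
            = (if (dir' x).2 = z then (1:ℕ) else 0) := by
          intro x; rw [dif_neg x.2]
        rw [Finset.sum_congr rfl (fun x _ => hfst x), Finset.sum_congr rfl (fun x _ => hsnd x)]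
        have := hb' z
        rw [cnt, cnt] at this
        simp [this, hl]
    · -- no loops: merge two edges through a common vertex
      push_neg at hloop
      obtain ⟨e0⟩ := hE
      rcases hE0 : ends e0 with ⟨u, v0⟩
      have huv : u ≠ v0 := by have := hloop e0; rw [hE0] at this; exact this
      have hinc : ∃ e1, e1 ≠ e0 ∧ ((ends e1).1 = v0 ∨ (ends e1).2 = v0) := by
        by_contra h
        push_neg at h
        have hone : degS ends v0 = 1 := by
          rw [degS, ← Finset.add_sum_erase _ _ (mem_univ e0)]
          have h0 : ∑ e ∈ univ.erase e0,
              ((if (ends e).1 = v0 then 1 else 0) + (if (ends e).2 = v0 then 1 else 0)) = 0 := by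
            apply Finset.sum_eq_zero
            intro e he
            have := h e (Finset.ne_of_mem_erase he)
            simp [this.1, this.2]
          rw [h0, hE0]
          simp [huv]
        have h5 := heven v0
        rw [hone, Nat.even_iff] at h5
        omega
      obtain ⟨e1, he1ne, he1inc⟩ := hinc
      set w : V := if (ends e1).1 = v0 then (ends e1).2 else (ends e1).1 with hw
      have hends1 : ends e1 = (v0, w) ∨ ends e1 = (w, v0) := by
        by_cases h1 : (ends e1).1 = v0
        · left; rw [hw, if_pos h1]; exact Prod.ext h1 rfl
        · right; rw [hw, if_neg h1]
          exact Prod.ext rfl (he1inc.resolve_left h1)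
      -- the smaller graph
      set S := {e : E // e ≠ e0 ∧ e ≠ e1} with hS
      have hsum : ∀ f : E → ℕ, ∑ e, f e = f e0 + f e1 + ∑ x : S, f x.1 := by
        intro f
        rw [← Finset.add_sum_erase _ f (mem_univ e0),
            ← Finset.add_sum_erase _ f (Finset.mem_erase.mpr ⟨he1ne, mem_univ e1⟩), ← add_assoc]
        congr 1
        exact Finset.sum_subtype _
          (by intro x; simp only [Finset.mem_erase, Finset.mem_univ, and_true]; tauto) f
      have hcardS : Fintype.card S + 1 ≤ N := by
        have h3 := hsum (fun _ => 1)
        simp only [Finset.sum_const, Finset.card_univ, smul_eq_mul, mul_one] at h3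
        omega
      let E' := Option S
      let ends' : E' → V × V := fun x => Option.casesOn x (u, w) (fun y => ends y.1)
      have hsum' : ∀ g : E' → ℕ, ∑ x, g x = g none + ∑ y : S, g (some y) :=
        fun g => Fintype.sum_option g
      have hcard' : Fintype.card E' ≤ N := by
        rw [Fintype.card_option]; omega
      have heven' : ∀ z, Even (degS ends' z) := by
        intro z
        have h1 := heven z
        rw [degS, hsum] at h1
        rw [degS, hsum']
        have hc1 : ((if (ends e1).1 = z then 1 else 0) + (if (ends e1).2 = z then 1 else 0) : ℕ)
            = (if v0 = z then 1 else 0) + (if w = z then 1 else 0) := by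
          rcases hends1 with h | h <;> rw [h] <;> simp [add_comm]
        rw [hc1, hE0] at h1
        have hnone : ((if (ends' none).1 = z then 1 else 0)
            + (if (ends' none).2 = z then 1 else 0) : ℕ)
            = (if u = z then 1 else 0) + (if w = z then 1 else 0) := rfl
        have hsome : (∑ y : S, ((if (ends' (some y)).1 = z then (1:ℕ) else 0)
              + (if (ends' (some y)).2 = z then 1 else 0)))
            = ∑ y : S, ((if (ends y.1).1 = z then 1 else 0)
              + (if (ends y.1).2 = z then 1 else 0)) := rfl
        rw [hnone, hsome]
        simp only [Prod.fst, Prod.snd] at h1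
        rw [Nat.even_iff] at h1 ⊢
        omega
      obtain ⟨dir', hv', hb'⟩ := ih E' ends' hcard' heven'
      have hvnone : dir' none = (u, w) ∨ dir' none = (w, u) := by
        rcases hv' none with h | h
        · exact Or.inl h
        · exact Or.inr h
      by_cases hdir : dir' none = (u, w)
      case pos =>
        refine ⟨fun e => if h0 : e = e0 then (u, v0) else if h1 : e = e1 then (v0, w)
          else dir' (some ⟨e, h0, h1⟩), ?_, ?_⟩
        all_goals
          set dirF : E → V × V := fun e => if h0 : e = e0 then (u, v0) else if h1 : e = e1
            then (v0, w) else dir' (some ⟨e, h0, h1⟩) with hdirF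
        all_goals
          have dF0 : dirF e0 = (u, v0) := by simp [hdirF]
        all_goals
          have dF1 : dirF e1 = (v0, w) := by simp [hdirF, he1ne]
        all_goals
          have dFS : ∀ y : S, dirF y.1 = dir' (some y) := by
            rintro ⟨y, hy0, hy1⟩; simp [hdirF, hy0, hy1]
        · intro e
          by_cases h0 : e = e0
          · subst h0; left; rw [dF0, hE0]
          by_cases h1 : e = e1
          · subst h1
            rcases hends1 with h | h
            · left; rw [dF1, h]
            · right; rw [dF1, h]; rfl
          · have := hv' (some ⟨e, h0, h1⟩)
            have he : dirF e = dir' (some ⟨e, h0, h1⟩) := dFS ⟨e, h0, h1⟩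
            rw [he]
            exact this
        · intro z
          rw [cnt, cnt, hsum, hsum]
          have hb := hb' z
          rw [cnt, cnt, hsum', hsum'] at hb
          simp only [hdir] at hb
          rw [Finset.sum_congr rfl (fun y _ => by rw [dFS y] :
            ∀ y ∈ (univ : Finset S), (if (dirF y.1).1 = z then (1:ℕ) else 0)
              = (if (dir' (some y)).1 = z then 1 else 0)),
            Finset.sum_congr rfl (fun y _ => by rw [dFS y] :
            ∀ y ∈ (univ : Finset S), (if (dirF y.1).2 = z then (1:ℕ) else 0)
              = (if (dir' (some y)).2 = z then 1 else 0)), dF0, dF1]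
          simp only at hb ⊢
          omega
      case neg =>
        have hdir' : dir' none = (w, u) := hvnone.resolve_left hdir
        refine ⟨fun e => if h0 : e = e0 then (v0, u) else if h1 : e = e1 then (w, v0)
          else dir' (some ⟨e, h0, h1⟩), ?_, ?_⟩
        all_goals
          set dirF : E → V × V := fun e => if h0 : e = e0 then (v0, u) else if h1 : e = e1
            then (w, v0) else dir' (some ⟨e, h0, h1⟩) with hdirF
        all_goals
          have dF0 : dirF e0 = (v0, u) := by simp [hdirF]
        all_goals
          have dF1 : dirF e1 = (w, v0) := by simp [hdirF, he1ne]
        all_goals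
          have dFS : ∀ y : S, dirF y.1 = dir' (some y) := by
            rintro ⟨y, hy0, hy1⟩; simp [hdirF, hy0, hy1]
        · intro e
          by_cases h0 : e = e0
          · subst h0; right; rw [dF0, hE0]; rfl
          by_cases h1 : e = e1
          · subst h1
            rcases hends1 with h | h
            · right; rw [dF1, h]; rfl
            · left; rw [dF1, h]
          · have := hv' (some ⟨e, h0, h1⟩)
            have he : dirF e = dir' (some ⟨e, h0, h1⟩) := dFS ⟨e, h0, h1⟩
            rw [he]
            exact this
        · intro z
          rw [cnt, cnt, hsum, hsum]
          have hb := hb' z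
          rw [cnt, cnt, hsum', hsum'] at hb
          simp only [hdir'] at hb
          rw [Finset.sum_congr rfl (fun y _ => by rw [dFS y] :
            ∀ y ∈ (univ : Finset S), (if (dirF y.1).1 = z then (1:ℕ) else 0)
              = (if (dir' (some y)).1 = z then 1 else 0)),
            Finset.sum_congr rfl (fun y _ => by rw [dFS y] :
            ∀ y ∈ (univ : Finset S), (if (dirF y.1).2 = z then (1:ℕ) else 0)
              = (if (dir' (some y)).2 = z then 1 else 0)), dF0, dF1]
          simp only at hb ⊢
          omega

variable [Fintype V]

lemma bipartite : ∀ (n : ℕ) (E : Type u) [Fintype E] (tail head : E → V),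
    (∀ z, cnt tail z = n) → (∀ z, cnt head z = n) →
    ∃ c : E → Fin n, ∀ (i : Fin n) (z : V),
      (∑ e, if c e = i ∧ tail e = z then 1 else 0) = 1 ∧
      (∑ e, if c e = i ∧ head e = z then 1 else 0) = 1 := by
  intro n
  induction n with
  | zero =>
    intro E _ tail head ht _
    have hE : IsEmpty E := by
      by_contra h
      rw [not_isEmpty_iff] at h
      obtain ⟨e⟩ := h
      have h0 := ht (tail e)
      rw [cnt] at h0
      have := Finset.sum_eq_zero_iff.mp h0 e (mem_univ e)
      simp at this
    exact ⟨fun e => (hE.false e).elim, fun i => i.elim0⟩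
  | succ n ih =>
    intro E _ tail head ht hh
    classical
    -- Hall's condition
    set t : V → Finset V := fun z => (univ.filter fun e => tail e = z).image head with htdef
    have hcount : ∀ (g : E → V) (hg : ∀ z, cnt g z = n + 1) (A : Finset V),
        (univ.filter fun e => g e ∈ A).card = A.card * (n + 1) := by
      intro g hg A
      rw [Finset.card_filter]
      have : ∀ e : E, (if g e ∈ A then (1:ℕ) else 0) = ∑ z ∈ A, if g e = z then 1 else 0 := by
        intro e
        rw [Finset.sum_ite_eq A (g e) (fun _ => (1:ℕ))]
      rw [Finset.sum_congr rfl fun e _ => this e, Finset.sum_comm]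
      have : ∀ z ∈ A, (∑ e : E, if g e = z then (1:ℕ) else 0) = n + 1 := fun z _ => hg z
      rw [Finset.sum_congr rfl this, Finset.sum_const, smul_eq_mul]
    have hall : ∀ A : Finset V, A.card ≤ (A.biUnion t).card := by
      intro A
      have h1 := hcount tail ht A
      have h2 := hcount head hh (A.biUnion t)
      have hsub : (univ.filter fun e => tail e ∈ A) ⊆
          (univ.filter fun e => head e ∈ A.biUnion t) := by
        intro e he
        rw [Finset.mem_filter] at he ⊢
        refine ⟨mem_univ e, Finset.mem_biUnion.mpr ⟨tail e, he.2, ?_⟩⟩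
        rw [htdef]
        exact Finset.mem_image.mpr ⟨e, Finset.mem_filter.mpr ⟨mem_univ e, rfl⟩, rfl⟩
      have := Finset.card_le_card hsub
      rw [h1, h2] at this
      exact Nat.le_of_mul_le_mul_right this (Nat.succ_pos n)
    obtain ⟨f, hfinj, hft⟩ := (Finset.all_card_le_biUnion_card_iff_exists_injective t).mp hall
    have hm : ∀ z, ∃ e, tail e = z ∧ head e = f z := by
      intro z
      have := hft z
      rw [htdef] at this
      obtain ⟨e, he, hh'⟩ := Finset.mem_image.mp this
      exact ⟨e, (Finset.mem_filter.mp he).2, hh'⟩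
    choose m hm1 hm2 using hm
    have hfbij : Function.Bijective f := Finite.injective_iff_bijective.mp hfinj
    -- split sums over E into the matching and the rest
    set p : E → Prop := fun e => ∀ z, m z ≠ e with hp
    have hminj : Function.Injective m := by
      intro a b hab
      have : tail (m a) = tail (m b) := by rw [hab]
      rwa [hm1, hm1] at this
    have hsplit : ∀ g : E → ℕ, ∑ e, g e = (∑ x : {e : E // p e}, g x.1) + ∑ z, g (m z) := by
      intro g
      rw [← Finset.sum_filter_add_sum_filter_not univ p g]
      congr 1
      · exact (Finset.sum_subtype (p := p) (Finset.filter p univ) (by intro x; simp) g)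
      · have himg : Finset.filter (fun x => ¬ p x) univ = univ.image m := by
          ext x
          simp only [Finset.mem_filter, Finset.mem_univ, true_and, Finset.mem_image, hp]
          push_neg
          tauto
        rw [himg, Finset.sum_image (fun a _ b _ h => hminj h)]
    have hone : ∀ (g : E → V) (hg : ∀ z, g (m z) = f z) (z : V),
        (∑ z' : V, if g (m z') = z then (1:ℕ) else 0) = 1 := by
      intro g hg z
      have : ∀ z' : V, (if g (m z') = z then (1:ℕ) else 0)
          = if z' = (Equiv.ofBijective f hfbij).symm z then 1 else 0 := by
        intro z'
        congr 1
        rw [hg]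
        rw [eq_iff_iff]
        constructor
        · intro h
          rw [← h]
          exact ((Equiv.ofBijective f hfbij).symm_apply_apply z').symm
        · intro h
          rw [h]
          exact (Equiv.ofBijective f hfbij).apply_symm_apply z
      rw [Finset.sum_congr rfl fun z' _ => this z']
      rw [Finset.sum_ite_eq' univ _ (fun _ => (1:ℕ))]
      simp
    have honet : ∀ z, (∑ z' : V, if tail (m z') = z then (1:ℕ) else 0) = 1 := by
      intro z
      have : ∀ z' : V, (if tail (m z') = z then (1:ℕ) else 0) = if z' = z then 1 else 0 := by
        intro z'; rw [hm1]
      rw [Finset.sum_congr rfl fun z' _ => this z', Finset.sum_ite_eq' univ _ (fun _ => (1:ℕ))]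
      simp
    -- the remaining graph is n-regular on both sides
    have ht' : ∀ z, cnt (fun x : {e : E // p e} => tail x.1) z = n := by
      intro z
      have h1 := ht z
      rw [cnt, hsplit] at h1
      rw [honet z] at h1
      rw [cnt]
      omega
    have hh' : ∀ z, cnt (fun x : {e : E // p e} => head x.1) z = n := by
      intro z
      have h1 := hh z
      rw [cnt, hsplit] at h1
      rw [hone head hm2 z] at h1
      rw [cnt]
      omega
    obtain ⟨c', hc'⟩ := ih {e : E // p e} (fun x => tail x.1) (fun x => head x.1) ht' hh'
    refine ⟨fun e => if h : p e then (c' ⟨e, h⟩).castSucc else Fin.last n, ?_⟩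
    set c : E → Fin (n+1) := fun e => if h : p e then (c' ⟨e, h⟩).castSucc else Fin.last n
      with hc
    have hcS : ∀ x : {e : E // p e}, c x.1 = (c' x).castSucc := by
      rintro ⟨x, hx⟩; simp only [hc]; rw [dif_pos hx]
    have hcM : ∀ z, c (m z) = Fin.last n := by
      intro z
      have : ¬ p (m z) := by simp only [hp]; push_neg; exact ⟨z, rfl⟩
      simp only [hc]; rw [dif_neg this]
    intro i z
    rcases Fin.eq_castSucc_or_eq_last i with ⟨j, rfl⟩ | rfl
    · -- color in the smaller graph
      have key : ∀ (g : E → V),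
          (∑ e, if c e = j.castSucc ∧ g e = z then (1:ℕ) else 0)
          = ∑ x : {e : E // p e}, if c' x = j ∧ g x.1 = z then 1 else 0 := by
        intro g
        rw [hsplit]
        have hz : ∀ z', (if c (m z') = j.castSucc ∧ g (m z') = z then (1:ℕ) else 0) = 0 := by
          intro z'
          rw [if_neg]
          rintro ⟨h1, -⟩
          rw [hcM] at h1
          exact (Fin.castSucc_lt_last j).ne' h1
        rw [Finset.sum_congr rfl fun z' _ => hz z', Finset.sum_const, smul_zero, add_zero]
        apply Finset.sum_congr rfl
        intro x _
        rw [hcS x]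
        congr 1
        rw [eq_iff_iff]
        constructor
        · rintro ⟨h1, h2⟩; exact ⟨Fin.castSucc_injective n h1, h2⟩
        · rintro ⟨h1, h2⟩; exact ⟨by rw [h1], h2⟩
      constructor
      · rw [key tail]; exact (hc' j z).1
      · rw [key head]; exact (hc' j z).2
    · -- the matching color
      have key : ∀ (g : E → V),
          (∑ e, if c e = Fin.last n ∧ g e = z then (1:ℕ) else 0)
          = ∑ z' : V, if g (m z') = z then (1:ℕ) else 0 := by
        intro g
        rw [hsplit]
        have hz : ∀ x : {e : E // p e},
            (if c x.1 = Fin.last n ∧ g x.1 = z then (1:ℕ) else 0) = 0 := by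
          intro x
          rw [if_neg]
          rintro ⟨h1, -⟩
          rw [hcS] at h1
          exact (Fin.castSucc_lt_last (c' x)).ne h1
        rw [Finset.sum_congr rfl fun x _ => hz x, Finset.sum_const, smul_zero, zero_add]
        apply Finset.sum_congr rfl
        intro z' _
        have hiff : (c (m z') = Fin.last n ∧ g (m z') = z) ↔ (g (m z') = z) := by
          simp [hcM]
        rw [if_congr hiff rfl rfl]
      constructor
      · rw [key tail, honet z]
      · rw [key head, hone head hm2 z]

end Petersen

/-- Petersen's theorem: every finite `2n`-regular multigraph admits a
`2`-factorization: the edge set can be partitioned into `n` spanning subgraphs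
(given by a coloring `c : E → Fin n` of the edges) each of which is `2`-regular. -/
theorem petersen_two_factorization {V E : Type*} [Fintype V] [Fintype E] [DecidableEq V]
    (n : ℕ) (ends : E → V × V)
    (hreg : ∀ v : V, multigraphDegree ends v = 2 * n) :
    ∃ c : E → Fin n, ∀ (i : Fin n) (v : V),
      multigraphDegree (fun e : {e : E // c e = i} => ends e.1) v = 2 := by
  classical
  have heven : ∀ z, Even (Petersen.degS ends z) := by
    intro z; rw [← Petersen.deg_eq, hreg]; exact ⟨n, two_mul n⟩
  obtain ⟨dir, hv, hb⟩ := Petersen.orient (Fintype.card E) E ends le_rfl heven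
  have hpt : ∀ (e : E) (z : V),
      ((if (dir e).1 = z then 1 else 0) + (if (dir e).2 = z then (1:ℕ) else 0))
      = ((if (ends e).1 = z then 1 else 0) + (if (ends e).2 = z then 1 else 0)) := by
    intro e z
    rcases hv e with h | h <;> rw [h]
    · show (if (ends e).2 = z then (1:ℕ) else 0) + (if (ends e).1 = z then 1 else 0) = _
      exact add_comm _ _
  have hdeg : ∀ z, Petersen.cnt (fun e => (dir e).1) z + Petersen.cnt (fun e => (dir e).2) z
      = Petersen.degS ends z := by
    intro z
    rw [Petersen.cnt, Petersen.cnt, ← Finset.sum_add_distrib]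
    exact Finset.sum_congr rfl fun e _ => hpt e z
  have htail : ∀ z, Petersen.cnt (fun e => (dir e).1) z = n := by
    intro z
    have h1 := hdeg z
    have h2 := hb z
    rw [← Petersen.deg_eq, hreg] at h1
    omega
  have hhead : ∀ z, Petersen.cnt (fun e => (dir e).2) z = n :=
    fun z => (hb z).symm.trans (htail z)
  obtain ⟨c, hc⟩ := Petersen.bipartite n E (fun e => (dir e).1) (fun e => (dir e).2) htail hhead
  refine ⟨c, ?_⟩
  intro i z
  rw [Petersen.deg_eq, Petersen.degS]
  have hsub : ∑ x : {e : E // c e = i},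
      ((if (ends x.1).1 = z then 1 else 0) + (if (ends x.1).2 = z then (1:ℕ) else 0))
      = ∑ e ∈ Finset.filter (fun e => c e = i) Finset.univ,
        ((if (ends e).1 = z then 1 else 0) + (if (ends e).2 = z then (1:ℕ) else 0)) :=
    (Finset.sum_subtype (p := fun e => c e = i)
      (Finset.filter (fun e => c e = i) Finset.univ) (by intro x; simp)
      (fun e => ((if (ends e).1 = z then 1 else 0) + (if (ends e).2 = z then (1:ℕ) else 0)))).symm
  rw [hsub, Finset.sum_filter]
  have hpe : ∀ e : E,
      (if c e = i then ((if (ends e).1 = z then 1 else 0) + (if (ends e).2 = z then (1:ℕ) else 0)) else 0)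
      = (if c e = i ∧ (dir e).1 = z then 1 else 0) + (if c e = i ∧ (dir e).2 = z then 1 else 0) := by
    intro e
    by_cases h : c e = i
    · rw [if_pos h, ← hpt e z]
      simp [h]
    · simp [h]
  rw [Finset.sum_congr rfl fun e _ => hpe e, Finset.sum_add_distrib,
    (hc i z).1, (hc i z).2]
end

section
/- Every finite 2n-regular graph admits a Schreier structure: there is an orientation of the edges and a labeling of each edge by one of n generators a_1,...,a_n such that every vertex has exactly one outgoing and exactly one incoming edge with each label a_i. -/
open Finset Function

lemma card_filter_mem_eq_mul {ι κ : Type*} [Fintype ι] [DecidableEq κ] {g : ι → κ} {k : ℕ}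
    (hg : ∀ v, #{e | g e = v} = k) (W : Finset κ) : #{e | g e ∈ W} = k * #W := by
  rw [← sum_card_fiberwise_eq_card_filter, sum_const_nat fun v _ => hg v, mul_comm]

section Degrees

variable {V E : Type*} [Fintype E] [DecidableEq V]

/-- Out-degree in the directed multigraph `o : E → V × V`, whose edge `e` runs from `(o e).1`
to `(o e).2`. -/
def outDegree (o : E → V × V) (v : V) : ℕ := #{e | (o e).1 = v}

def inDegree (o : E → V × V) (v : V) : ℕ := #{e | (o e).2 = v}

lemma multigraphDegree_eq_outDegree_add_inDegree (o : E → V × V) (v : V) :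
    multigraphDegree o v = outDegree o v + inDegree o v := rfl

lemma sum_multigraphDegree (ends : E → V × V) (W : Finset V) :
    ∑ v ∈ W, multigraphDegree ends v = #{e | (ends e).1 ∈ W} + #{e | (ends e).2 ∈ W} := by
  simp only [multigraphDegree, sum_add_distrib, sum_card_fiberwise_eq_card_filter]

lemma sum_univ_multigraphDegree [Fintype V] (ends : E → V × V) :
    ∑ v, multigraphDegree ends v = 2 * Fintype.card E := by
  simp [sum_multigraphDegree, two_mul]

lemma multigraphDegree_eq_of_forall_eq_or_eq_swap {o ends : E → V × V}
    (ho : ∀ e, o e = ends e ∨ o e = (ends e).swap) (v : V) :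
    multigraphDegree o v = multigraphDegree ends v := by
  simp only [multigraphDegree, card_filter, ← sum_add_distrib]
  refine sum_congr rfl fun e _ => ?_
  rcases ho e with h | h <;> simp [h, add_comm]

end Degrees

section Orientation

variable {V E : Type*} [Fintype E] [DecidableEq V] {n : ℕ}

lemma exists_injective_endpoint_choice (ends : E → V × V)
    (hreg : ∀ v, multigraphDegree ends v = 2 * n) :
    ∃ f : E → V × Fin n, Injective f ∧ ∀ e, (f e).1 = (ends e).1 ∨ (f e).1 = (ends e).2 := by
  let r : E → Finset (V × Fin n) := fun e => {(ends e).1, (ends e).2} ×ˢ univ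
  suffices hall : ∀ s : Finset E, #s ≤ #(s.biUnion r) by
    obtain ⟨f, hf, hfr⟩ := (all_card_le_biUnion_card_iff_exists_injective r).mp hall
    exact ⟨f, hf, fun e => by simpa [r] using (mem_product.mp (hfr e)).1⟩
  intro s
  let W := s.biUnion fun e => {(ends e).1, (ends e).2}
  have hW : s.biUnion r = W ×ˢ univ := by ext; simp [r, W]
  have h₁ : s ⊆ ({e | (ends e).1 ∈ W} : Finset E) := fun e he => by
    simpa [W] using ⟨e, he, by simp⟩
  have h₂ : s ⊆ ({e | (ends e).2 ∈ W} : Finset E) := fun e he => by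
    simpa [W] using ⟨e, he, by simp⟩
  have hsum : 2 * #s ≤ 2 * (n * #W) := calc
    2 * #s ≤ #{e | (ends e).1 ∈ W} + #{e | (ends e).2 ∈ W} := by
      linarith [card_le_card h₁, card_le_card h₂]
    _ = ∑ v ∈ W, multigraphDegree ends v := (sum_multigraphDegree ends W).symm
    _ = 2 * (n * #W) := by rw [sum_const_nat fun v _ => hreg v]; ring
  rw [hW, card_product, card_univ, Fintype.card_fin, mul_comm]
  omega

lemma exists_orientation_outDegree_eq [Fintype V] (ends : E → V × V)
    (hreg : ∀ v, multigraphDegree ends v = 2 * n) :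
    ∃ o : E → V × V, (∀ e, o e = ends e ∨ o e = (ends e).swap) ∧ ∀ v, outDegree o v = n := by
  obtain ⟨f, hf, hfe⟩ := exists_injective_endpoint_choice ends hreg
  have hcard : Fintype.card E = Fintype.card (V × Fin n) := by
    have := sum_univ_multigraphDegree ends
    simp only [hreg, sum_const, card_univ, smul_eq_mul] at this
    simp only [Fintype.card_prod, Fintype.card_fin]
    linarith
  let f' := Equiv.ofBijective f ((Fintype.bijective_iff_injective_and_card f).mpr ⟨hf, hcard⟩)
  let o e := if (f e).1 = (ends e).1 then ends e else (ends e).swap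
  have ho_fst e : (o e).1 = (f e).1 := by
    rcases hfe e with h | h <;> by_cases h' : (f e).1 = (ends e).1 <;> simp_all [o]
  refine ⟨o, fun e => by by_cases h : (f e).1 = (ends e).1 <;> simp [o, h], fun v => ?_⟩
  simp only [outDegree, ho_fst]
  rw [card_equiv f' (t := {v} ×ˢ univ) fun e => by
    simp only [f', Equiv.ofBijective_apply, mem_filter, mem_univ, true_and, mem_product,
      mem_singleton, and_true]]
  simp

end Orientation

section Decomposition

variable {V E : Type*} [Fintype V] [Fintype E] [DecidableEq V]

lemma exists_perm_matching_of_regular {n : ℕ} (hn : 0 < n) (o : E → V × V)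
    (hout : ∀ v, outDegree o v = n) (hin : ∀ v, inDegree o v = n) :
    ∃ (σ : Equiv.Perm V) (m : V → E), Injective m ∧ ∀ v, o (m v) = (v, σ v) := by
  let r : V → Finset V := fun v => image (fun e => (o e).2) {e | (o e).1 = v}
  have hall (s : Finset V) : #s ≤ #(s.biUnion r) := by
    have hsub : ({e | (o e).1 ∈ s} : Finset E) ⊆ ({e | (o e).2 ∈ s.biUnion r} : Finset E) :=
      fun e he => by
        simp only [mem_filter, mem_univ, true_and] at he ⊢
        exact mem_biUnion.mpr ⟨_, he, mem_image_of_mem _ (by simp)⟩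
    have := card_le_card hsub
    rw [card_filter_mem_eq_mul hout, card_filter_mem_eq_mul hin] at this
    exact Nat.le_of_mul_le_mul_left this hn
  obtain ⟨f, hf, hfr⟩ := (all_card_le_biUnion_card_iff_exists_injective r).mp hall
  have hm v : ∃ e, o e = (v, f v) := by
    obtain ⟨e, he, hef⟩ := mem_image.mp (hfr v)
    exact ⟨e, Prod.ext (mem_filter.mp he).2 hef⟩
  choose m hm using hm
  refine ⟨Equiv.ofBijective f (Finite.injective_iff_bijective.mp hf), m, fun v w h => ?_, hm⟩
  simpa [hm] using congrArg (fun e => (o e).1) h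

lemma card_filter_subtype_notMem_range [DecidableEq E] {k : ℕ} {g : E → V} {m : V → E}
    (p : Equiv.Perm V) (hgm : ∀ v, g (m v) = p v) (hg : ∀ v, #{e | g e = v} = k + 1) (v : V) :
    #({e | g e = v} : Finset {e // e ∉ Set.range m}) = k := by
  have hrange : #({e | g e = v ∧ e ∈ Set.range m} : Finset E) = 1 :=
    card_eq_one.mpr ⟨m (p.symm v), by ext; aesop⟩
  have hsplit :=
    card_filter_add_card_filter_not (s := ({e | g e = v} : Finset E)) (· ∈ Set.range m)
  rw [filter_filter, filter_filter, hrange, hg] at hsplit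
  have hmap : map (Embedding.subtype _) ({e | g e = v} : Finset {e // e ∉ Set.range m}) =
      ({e | g e = v ∧ e ∉ Set.range m} : Finset E) := by
    ext e; simp [and_comm]
  rw [← card_map (Embedding.subtype _), hmap]
  omega

theorem exists_perm_decomposition_of_regular {n : ℕ} (o : E → V × V)
    (hout : ∀ v, outDegree o v = n) (hin : ∀ v, inDegree o v = n) :
    ∃ (σ : Fin n → Equiv.Perm V) (β : Fin n × V ≃ E), ∀ i x, o (β (i, x)) = (x, σ i x) := by
  induction n generalizing E with
  | zero =>
    have : IsEmpty E := ⟨fun e => (card_pos.mpr ⟨e, by simp⟩).ne' (hout (o e).1)⟩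
    exact ⟨finZeroElim, Equiv.equivOfIsEmpty _ _, finZeroElim⟩
  | succ n ih =>
    classical
    obtain ⟨σ₀, m, hm, hmo⟩ := exists_perm_matching_of_regular n.succ_pos o hout hin
    obtain ⟨σ, β, hβ⟩ := ih (fun e : {e // e ∉ Set.range m} => o e)
      (card_filter_subtype_notMem_range 1 (fun v => by simp [hmo]) hout)
      (card_filter_subtype_notMem_range σ₀ (fun v => by simp [hmo]) hin)
    refine ⟨Fin.cons σ₀ σ, ((finSuccEquiv n).prodCongr (Equiv.refl V)).trans <|
      optionProdEquiv.trans <|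
        ((Equiv.ofInjective m hm).sumCongr β).trans (Equiv.sumCompl (· ∈ Set.range m)),
      fun i x => ?_⟩
    induction i using Fin.cases <;> simp [hmo, hβ]

end Decomposition

/-- The edge `β (i, x)` carries the label `i` and is oriented from `x` to `σ i x`. -/
theorem finite_regular_admits_schreier_structure {V E : Type*} [Fintype V] [Fintype E]
    [DecidableEq V] (n : ℕ) (ends : E → V × V)
    (hreg : ∀ v : V, multigraphDegree ends v = 2 * n) :
    ∃ (σ : Fin n → Equiv.Perm V) (β : Fin n × V ≃ E),
      ∀ (i : Fin n) (x : V),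
        ends (β (i, x)) = (x, σ i x) ∨ ends (β (i, x)) = (σ i x, x) := by
  obtain ⟨o, ho, hout⟩ := exists_orientation_outDegree_eq ends hreg
  have hin v : inDegree o v = n := by
    have := multigraphDegree_eq_of_forall_eq_or_eq_swap ho v
    rw [multigraphDegree_eq_outDegree_add_inDegree, hout, hreg] at this
    omega
  obtain ⟨σ, β, hβ⟩ := exists_perm_decomposition_of_regular o hout hin
  refine ⟨σ, β, fun i x => ?_⟩
  rcases ho (β (i, x)) with h | h
  · exact .inl (h ▸ hβ i x)
  · exact .inr (by rw [← Prod.swap_swap (ends _), ← h, hβ]; rfl)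
end

section
/- Every countable, locally finite, connected 2n-regular graph admits a Schreier structure: an edge-labeling by n generators, each given as a permutation of the vertex set, such that the edge multiset of the graph equals the union over i of the functional graphs of the permutations σ_1,...,σ_n. -/
/-!
Petersen's argument, run directly on the infinite graph: Hall's theorem for families of finite
sets (a compactness statement) and a relation-preserving Schröder–Bernstein theorem replace
finite counting. If both sides of a bipartite multigraph are `d`-regular with `d > 0`, Hall's
condition holds in both directions, so each side injects into the other along edges, and
Schröder–Bernstein yields a perfect matching.

Matching the slots `(i, v) : Fin n × V` with the edges at `v` in the `2n`-regular slot–edge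
incidence multigraph orients every edge away from its slot, so that each vertex has out- and
in-degree `n`. The oriented graph is an `n`-regular bipartite multigraph from tails to heads;
peeling off perfect matchings one at a time colours its edges with `Fin n`, and colour `i`
is the functional graph of a permutation `σ i`.
-/

open Function Set

section Matching

variable {α β L : Type*}

theorem exists_injective_of_card_fiber_eq {d : ℕ} (hd : 0 < d) (p : L → α) (q : L → β)
    (hp : ∀ a, Nat.card {l | p l = a} = d) (hq : ∀ b, Nat.card {l | q l = b} = d) :
    ∃ f : α → β, Injective f ∧ ∀ a, ∃ l, p l = a ∧ q l = f a := by
  classical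
  have hpfin (a : α) : {l | p l = a}.Finite :=
    Set.finite_coe_iff.1 (Nat.finite_of_card_ne_zero ((hp a).trans_ne hd.ne'))
  have hqfin (b : β) : {l | q l = b}.Finite :=
    Set.finite_coe_iff.1 (Nat.finite_of_card_ne_zero ((hq b).trans_ne hd.ne'))
  let F a := (hpfin a).toFinset
  have hF (a : α) (l : L) : l ∈ F a ↔ p l = a := Set.Finite.mem_toFinset _
  have hall (S : Finset α) : S.card ≤ (S.biUnion fun a => (F a).image q).card := by
    set T := S.biUnion F
    have hdisj : (S : Set α).PairwiseDisjoint F := fun a _ b _ hab =>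
      Finset.disjoint_left.2 fun l hla hlb => hab <| ((hF a l).1 hla).symm.trans ((hF b l).1 hlb)
    have hT : T.card = S.card * d := by
      rw [Finset.card_biUnion hdisj, Finset.sum_const_nat fun a _ => ?_]
      rw [← Set.ncard_eq_toFinset_card _ (hpfin a), ← Nat.card_coe_set_eq, hp a]
    have hT' : T.card ≤ d * (T.image q).card := Finset.card_le_mul_card_image T d fun b _ => by
      rw [← hq b, Nat.card_coe_set_eq, ← Set.ncard_coe_finset]
      exact Set.ncard_le_ncard (fun l hl => (Finset.mem_filter.1 hl).2) (hqfin b)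
    rw [← Finset.biUnion_image]
    exact Nat.le_of_mul_le_mul_left (by linarith) hd
  obtain ⟨f, hf, hfF⟩ :=
    (Finset.all_card_le_biUnion_card_iff_exists_injective fun a => (F a).image q).1 hall
  refine ⟨f, hf, fun a => ?_⟩
  obtain ⟨l, hl, hlq⟩ := Finset.mem_image.1 (hfF a)
  exact ⟨l, (hF a l).1 hl, hlq⟩

theorem bijective_restrict_range_of_bijective_comp {γ : Type*} {m : α → L} {r : L → γ}
    (hr : Bijective (r ∘ m)) : Bijective fun l : range m => r l :=
  (Bijective.of_comp_iff _ (rangeFactorization_bijective.2 hr.1.of_comp)).1 hr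

theorem exists_perfect_matching_of_card_fiber_eq {d : ℕ} (hd : 0 < d)
    (p : L → α) (q : L → β) (hp : ∀ a, Nat.card {l | p l = a} = d)
    (hq : ∀ b, Nat.card {l | q l = b} = d) :
    ∃ S : Set L, Bijective (fun l : S => p l) ∧ Bijective fun l : S => q l := by
  obtain ⟨f, hf, hfpq⟩ := exists_injective_of_card_fiber_eq hd p q hp hq
  obtain ⟨g, hg, hgqp⟩ := exists_injective_of_card_fiber_eq hd q p hq hp
  obtain ⟨h, hh, hhpq⟩ := Embedding.schroeder_bernstein_of_rel hf hg
    (fun a b => ∃ l, p l = a ∧ q l = b) hfpq fun b => (hgqp b).imp fun _ => And.symm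
  choose m hmp hmq using hhpq
  refine ⟨range m, bijective_restrict_range_of_bijective_comp ?_,
    bijective_restrict_range_of_bijective_comp ?_⟩
  · simpa only [show p ∘ m = id from funext hmp] using bijective_id
  · simpa only [show q ∘ m = h from funext hmq] using hh

end Matching

section HalfEdges

variable {V E : Type*}

/-- Half-edges of a multigraph are `E ⊕ E`: `inl e` sits at the first end of `e`, `inr e` at the
second, so a loop has two half-edges at its vertex. -/
def halfEdgeVertex (ends : E → V × V) : E ⊕ E → V :=
  Sum.elim (fun e => (ends e).1) (fun e => (ends e).2)

theorem card_halfEdgeVertex_fiber (ends : E → V × V) {v : V}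
    (h₁ : {e | (ends e).1 = v}.Finite) (h₂ : {e | (ends e).2 = v}.Finite) :
    Nat.card {x | halfEdgeVertex ends x = v} =
      Nat.card {e | (ends e).1 = v} + Nat.card {e | (ends e).2 = v} := by
  have := h₁.to_subtype
  have := h₂.to_subtype
  exact (Nat.card_congr Equiv.subtypeSum).trans
    (Nat.card_sum (α := {e | (ends e).1 = v}) (β := {e | (ends e).2 = v}))

theorem exists_perm_halfEdgeVertex_eq (o ends : E → V × V)
    (ho : ∀ e, o e = ends e ∨ o e = (ends e).swap) :
    ∃ φ : Equiv.Perm (E ⊕ E), ∀ x, halfEdgeVertex o x = halfEdgeVertex ends (φ x) := by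
  classical
  let flip (x : E ⊕ E) : E ⊕ E :=
    if o (x.elim id id) = ends (x.elim id id) then x else x.swap
  have hflip : Involutive flip := by
    rintro (e | e) <;> by_cases h : o e = ends e <;> simp [flip, h]
  refine ⟨hflip.toPerm, ?_⟩
  rintro (e | e) <;> by_cases h : o e = ends e <;>
    simp only [Involutive.coe_toPerm, flip, halfEdgeVertex, Sum.elim_inl, Sum.elim_inr, id, h,
      if_true, if_false, Sum.swap_inl, Sum.swap_inr]
  all_goals rw [(ho e).resolve_left h]; rfl

theorem card_fiber_fst_add_card_fiber_snd_of_reorient (o ends : E → V × V)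
    (ho : ∀ e, o e = ends e ∨ o e = (ends e).swap) {v : V}
    (h₁ : {e | (ends e).1 = v}.Finite) (h₂ : {e | (ends e).2 = v}.Finite) :
    Nat.card {e | (o e).1 = v} + Nat.card {e | (o e).2 = v} =
      Nat.card {e | (ends e).1 = v} + Nat.card {e | (ends e).2 = v} := by
  have hfin (j : V × V → V) (hj : ∀ e, j (o e) = (ends e).1 ∨ j (o e) = (ends e).2) :
      {e | j (o e) = v}.Finite :=
    (h₁.union h₂).subset fun e he => by rcases hj e with h | h <;> simp_all
  rw [← card_halfEdgeVertex_fiber ends h₁ h₂,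
    ← card_halfEdgeVertex_fiber o (hfin Prod.fst fun e => by rcases ho e with h | h <;> simp [h])
      (hfin Prod.snd fun e => by rcases ho e with h | h <;> simp [h])]
  obtain ⟨φ, hφ⟩ := exists_perm_halfEdgeVertex_eq o ends ho
  exact Nat.card_congr (φ.subtypeEquiv fun x => by simp [hφ])

theorem exists_equiv_fin_prod_incident {n : ℕ} (hn : 0 < n) (ends : E → V × V)
    (h₁ : ∀ v, {e | (ends e).1 = v}.Finite) (h₂ : ∀ v, {e | (ends e).2 = v}.Finite)
    (hreg : ∀ v, Nat.card {e | (ends e).1 = v} + Nat.card {e | (ends e).2 = v} = 2 * n) :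
    ∃ Θ : E ≃ Fin n × V, ∀ e, (ends e).1 = (Θ e).2 ∨ (ends e).2 = (Θ e).2 := by
  -- The slot `(i, v)` is linked to the edge `e` once for each end of `e` at `v`.
  let p : Fin n × (E ⊕ E) → Fin n × V := Prod.map id (halfEdgeVertex ends)
  let q : Fin n × (E ⊕ E) → E := fun l => l.2.elim id id
  have hp (a : Fin n × V) : Nat.card {l | p l = a} = 2 * n := by
    have : {l | p l = a} = {a.1} ×ˢ {x | halfEdgeVertex ends x = a.2} := by
      ext ⟨i, x⟩; simp [p, Prod.ext_iff]
    rw [← hreg a.2, ← card_halfEdgeVertex_fiber ends (h₁ _) (h₂ _), Nat.card_coe_set_eq,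
      Nat.card_coe_set_eq, this, Set.ncard_prod, Set.ncard_singleton, one_mul]
  have hq (e : E) : Nat.card {l | q l = e} = 2 * n := by
    have : {l | q l = e} = univ ×ˢ {.inl e, .inr e} := by
      ext ⟨i, x | x⟩ <;> simp [q, eq_comm]
    rw [Nat.card_coe_set_eq, this, Set.ncard_prod, Set.ncard_univ, Nat.card_fin,
      Set.ncard_pair Sum.inl_ne_inr, mul_comm]
  obtain ⟨S, hpS, hqS⟩ := exists_perfect_matching_of_card_fiber_eq (by omega) p q hp hq
  refine ⟨(Equiv.ofBijective _ hqS).symm.trans (Equiv.ofBijective _ hpS), fun e => ?_⟩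
  obtain ⟨l, rfl⟩ := (Equiv.ofBijective _ hqS).surjective e
  rw [Equiv.trans_apply, Equiv.symm_apply_apply]
  obtain ⟨⟨i, x | x⟩, _⟩ := l <;> simp [p, q, halfEdgeVertex]

theorem exists_orientation_card_fiber_eq {n : ℕ} (ends : E → V × V)
    (h₁ : ∀ v, {e | (ends e).1 = v}.Finite) (h₂ : ∀ v, {e | (ends e).2 = v}.Finite)
    (hreg : ∀ v, Nat.card {e | (ends e).1 = v} + Nat.card {e | (ends e).2 = v} = 2 * n) :
    ∃ o : E → V × V, (∀ e, o e = ends e ∨ o e = (ends e).swap) ∧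
      (∀ v, {e | (o e).1 = v}.Finite) ∧ (∀ v, Nat.card {e | (o e).1 = v} = n) ∧
      ∀ v, Nat.card {e | (o e).2 = v} = n := by
  rcases n.eq_zero_or_pos with rfl | hn
  · exact ⟨ends, fun e => .inl rfl, h₁, fun v => by have := hreg v; omega,
      fun v => by have := hreg v; omega⟩
  obtain ⟨Θ, hΘ⟩ := exists_equiv_fin_prod_incident hn ends h₁ h₂ hreg
  classical
  let o e := if (ends e).1 = (Θ e).2 then ends e else (ends e).swap
  have ho : ∀ e, o e = ends e ∨ o e = (ends e).swap := fun e => by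
    by_cases h : (ends e).1 = (Θ e).2 <;> simp [o, h]
  have hotl (v : V) : Nat.card {e | (o e).1 = v} = n := by
    have hfst (e : E) : (o e).1 = (Θ e).2 := by
      by_cases h : (ends e).1 = (Θ e).2 <;> simp [o, h, (hΘ e).resolve_left]
    calc Nat.card {e | (o e).1 = v} = Nat.card (univ ×ˢ {v} : Set (Fin n × V)) :=
          Nat.card_congr (Θ.subtypeEquiv fun e => by simp [hfst])
      _ = n := by
          rw [Nat.card_coe_set_eq, Set.ncard_prod, Set.ncard_univ, Nat.card_fin,
            Set.ncard_singleton, mul_one]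
  refine ⟨o, ho, fun v => ?_, hotl, fun v => ?_⟩
  · exact Set.finite_coe_iff.1 (Nat.finite_of_card_ne_zero ((hotl v).trans_ne hn.ne'))
  · have := card_fiber_fst_add_card_fiber_snd_of_reorient o ends ho (h₁ v) (h₂ v)
    rw [hotl, hreg] at this
    omega

end HalfEdges

section Factorization

variable {L V : Type*}

theorem card_fiber_compl_of_bijective {f : L → V} {S : Set L} (hS : Bijective fun l : S => f l)
    (v : V) : Nat.card {l : ↥Sᶜ | f l = v} = Nat.card {l | f l = v} - 1 := by
  obtain ⟨⟨s, hs⟩, hsv⟩ := hS.2 v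
  simp only at hsv
  subst hsv
  have hfiber : {l | l ∈ Sᶜ ∧ f l = f s} = {l | f l = f s} \ {s} := by
    ext l
    simp only [mem_ofPred_eq, mem_compl_iff, mem_sdiff, mem_singleton_iff]
    refine ⟨fun ⟨hl, h⟩ => ⟨h, fun h' => hl (h' ▸ hs)⟩,
      fun ⟨h, hne⟩ => ⟨fun hl => hne ?_, h⟩⟩
    exact congrArg Subtype.val (hS.1 (a₁ := ⟨l, hl⟩) (a₂ := ⟨s, hs⟩) h)
  calc Nat.card {l : ↥Sᶜ | f l = f s} = Nat.card ({l | f l = f s} \ {s} : Set L) := by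
        rw [← hfiber]
        exact Nat.card_congr (Equiv.subtypeSubtypeEquivSubtypeInter (· ∈ Sᶜ) (f · = f s))
    _ = _ := by
        rw [Nat.card_coe_set_eq, Nat.card_coe_set_eq,
          Set.ncard_sdiff_singleton_of_mem (s := {l | f l = f s}) rfl]

theorem bijective_extend_coloring {k : ℕ} {f : L → V} {S : Set L} [DecidablePred (· ∈ S)]
    (hS : Bijective fun l : S => f l) {c : ↥Sᶜ → Fin k}
    (hc : Bijective fun l : ↥Sᶜ => (c l, f l)) :
    Bijective fun l => (if h : l ∈ S then Fin.last k else (c ⟨l, h⟩).castSucc, f l) := by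
  constructor
  · intro l₁ l₂ h
    simp only [Prod.mk.injEq] at h
    obtain ⟨hc₁₂, hf⟩ := h
    by_cases h₁ : l₁ ∈ S <;> by_cases h₂ : l₂ ∈ S <;>
      simp only [h₁, h₂, dif_pos] at hc₁₂
    · exact congrArg Subtype.val (hS.1 (a₁ := ⟨l₁, h₁⟩) (a₂ := ⟨l₂, h₂⟩) hf)
    · exact absurd hc₁₂.symm (Fin.castSucc_ne_last _)
    · exact absurd hc₁₂ (Fin.castSucc_ne_last _)
    · exact congrArg Subtype.val (hc.1 (a₁ := ⟨l₁, h₁⟩) (a₂ := ⟨l₂, h₂⟩)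
        (Prod.ext (Fin.castSucc_injective _ hc₁₂) hf))
  · rintro ⟨i, v⟩
    induction i using Fin.lastCases with
    | last =>
      obtain ⟨⟨l, hl⟩, rfl⟩ := hS.2 v
      exact ⟨l, by simp [hl]⟩
    | cast j =>
      obtain ⟨⟨l, hl⟩, hlj⟩ := hc.2 (j, v)
      simp only [Prod.mk.injEq] at hlj
      have hl' : l ∉ S := hl
      exact ⟨l, by simp [hl', hlj]⟩

theorem exists_coloring_of_card_fiber_eq (k : ℕ) {L : Type*} (tl hd : L → V)
    (hfin : ∀ v, {l | tl l = v}.Finite) (htl : ∀ v, Nat.card {l | tl l = v} = k)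
    (hhd : ∀ v, Nat.card {l | hd l = v} = k) :
    ∃ c : L → Fin k, Bijective (fun l => (c l, tl l)) ∧ Bijective fun l => (c l, hd l) := by
  induction k generalizing L with
  | zero =>
    have : IsEmpty L := ⟨fun l => by
      have := (Set.ncard_pos (hfin (tl l))).2 ⟨l, rfl⟩
      rw [← Nat.card_coe_set_eq, htl] at this
      omega⟩
    exact ⟨isEmptyElim, ⟨fun l => isEmptyElim l, fun a => a.1.elim0⟩,
      ⟨fun l => isEmptyElim l, fun a => a.1.elim0⟩⟩
  | succ k ih =>
    classical
    obtain ⟨S, htlS, hhdS⟩ := exists_perfect_matching_of_card_fiber_eq k.succ_pos tl hd htl hhd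
    obtain ⟨c, hctl, hchd⟩ := ih (fun l : ↥Sᶜ => tl l) (fun l => hd l)
      (fun v => (hfin v).preimage Subtype.val_injective.injOn)
      (fun v => by rw [card_fiber_compl_of_bijective htlS, htl]; rfl)
      (fun v => by rw [card_fiber_compl_of_bijective hhdS, hhd]; rfl)
    exact ⟨_, bijective_extend_coloring htlS hctl, bijective_extend_coloring hhdS hchd⟩

theorem exists_perms_of_bijective_coloring {k : ℕ} {c : L → Fin k} {tl hd : L → V}
    (htl : Bijective fun l => (c l, tl l)) (hhd : Bijective fun l => (c l, hd l)) :
    ∃ (σ : Fin k → Equiv.Perm V) (β : Fin k × V ≃ L),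
      ∀ i x, tl (β (i, x)) = x ∧ hd (β (i, x)) = σ i x := by
  let β := (Equiv.ofBijective _ htl).symm
  have hβ (a : Fin k × V) : (c (β a), tl (β a)) = a :=
    (Equiv.ofBijective _ htl).apply_symm_apply a
  have hσ (i : Fin k) : Bijective fun x => hd (β (i, x)) := by
    refine ⟨fun x y hxy => ?_, fun w => ?_⟩
    · have hc (x : V) : c (β (i, x)) = i := congrArg Prod.fst (hβ (i, x))
      exact (Prod.mk_inj.1 (β.injective (hhd.1 (Prod.ext ((hc x).trans (hc y).symm) hxy)))).2
    · obtain ⟨l, hl⟩ := hhd.2 (i, w)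
      obtain ⟨rfl, rfl⟩ := Prod.mk_inj.1 hl
      exact ⟨tl l, congrArg hd ((Equiv.ofBijective _ htl).symm_apply_apply l)⟩
  exact ⟨fun i => Equiv.ofBijective _ (hσ i), β,
    fun i x => ⟨congrArg Prod.snd (hβ (i, x)), rfl⟩⟩

end Factorization

theorem countable_regular_admits_schreier_structure_general {V E : Type*}
    (n : ℕ) (ends : E → V × V)
    -- local finiteness: only finitely many edge-ends at each vertex
    (hlocfin₁ : ∀ v : V, {e : E | (ends e).1 = v}.Finite)
    (hlocfin₂ : ∀ v : V, {e : E | (ends e).2 = v}.Finite)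
    -- 2n-regularity: each vertex has degree 2n (a loop contributes 2)
    (hreg : ∀ v : V,
      Nat.card {e : E | (ends e).1 = v} + Nat.card {e : E | (ends e).2 = v} = 2 * n) :
    ∃ (σ : Fin n → Equiv.Perm V) (β : Fin n × V ≃ E),
      ∀ (i : Fin n) (x : V),
        ends (β (i, x)) = (x, σ i x) ∨ ends (β (i, x)) = (σ i x, x) := by
  obtain ⟨o, ho, hfin, htl, hhd⟩ :=
    exists_orientation_card_fiber_eq ends hlocfin₁ hlocfin₂ hreg
  obtain ⟨c, hctl, hchd⟩ := exists_coloring_of_card_fiber_eq n _ _ hfin htl hhd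
  obtain ⟨σ, β, hβ⟩ := exists_perms_of_bijective_coloring hctl hchd
  refine ⟨σ, β, fun i x => ?_⟩
  have hoβ : o (β (i, x)) = (x, σ i x) := Prod.ext (hβ i x).1 (hβ i x).2
  rcases ho (β (i, x)) with h | h
  · exact .inl (h ▸ hoβ)
  · exact .inr (by rw [← Prod.swap_swap (ends _), ← h, hoβ]; rfl)

/-- every countable, locally finite, connected `2n`-regular multigraph
admits a Schreier structure: there are `n` permutations `σ 1, …, σ n` of the vertex
set such that the edge multiset of the graph is exactly the union of the functional
graphs of the `σ i` (witnessed by the bijection `β`, which orients the edge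
`β (i, x)` from `x` to `σ i x`).  Here the degree of `v` is the (finite) number of
edge-ends at `v`, loops counting twice. -/
theorem countable_regular_admits_schreier_structure {V E : Type*}
    [Countable V] [Countable E] (n : ℕ) (ends : E → V × V)
    -- local finiteness: only finitely many edge-ends at each vertex
    (hlocfin₁ : ∀ v : V, {e : E | (ends e).1 = v}.Finite)
    (hlocfin₂ : ∀ v : V, {e : E | (ends e).2 = v}.Finite)
    -- 2n-regularity: each vertex has degree 2n (a loop contributes 2)
    (hreg : ∀ v : V,
      Nat.card {e : E | (ends e).1 = v} + Nat.card {e : E | (ends e).2 = v} = 2 * n)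
    -- connectedness
    (hconn : ∀ x y : V, Relation.ReflTransGen
      (fun a b => ∃ e : E, ends e = (a, b) ∨ ends e = (b, a)) x y) :
    ∃ (σ : Fin n → Equiv.Perm V) (β : Fin n × V ≃ E),
      ∀ (i : Fin n) (x : V),
        ends (β (i, x)) = (x, σ i x) ∨ ends (β (i, x)) = (σ i x, x) :=
  countable_regular_admits_schreier_structure_general n ends hlocfin₁ hlocfin₂ hreg
end
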